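/- arXiv:1810.05816 — 5 statements merged into one kernel-verified Lean document; each statement's English description precedes it below -/
import Mathlib

section
/- Let E = ℓ¹(ℕ, ℝ) be the Banach space of absolutely summable real sequences with norm ‖x‖ = Σ_i |x i|. Let H : ℝ → (E →L[ℝ] E) be a continuous family of continuous linear operators, let β : ℝ → ℝ be continuous, and suppose that for every t ≥ 0 and every j ∈ ℕ one has (H(t) e_j)_j + Σ_{i ≠ j} |(H(t) e_j)_i| ≤ β(t), where e_j ∈ E denotes the j-th standard unit vector. If y : ℝ → E is differentiable with y'(t) = H(t)(y(t)) for all t ≥ 0, then for all t ≥ 0: ‖y(t)‖ ≤ exp(∫₀ᵗ β(u) du) · ‖y(0)‖. -/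
open Set Filter Topology
open scoped ENNReal

local notation "E₁" => lp (fun _ : ℕ => ℝ) 1

private lemma l1_norm_eq (f : E₁) : ‖f‖ = ∑' i, |f i| := by
  have h := lp.norm_eq_tsum_rpow (p := 1) (E := fun _ : ℕ => ℝ) (by norm_num) f
  simpa [Real.norm_eq_abs] using h

private lemma l1_summable (f : E₁) : Summable fun i => |f i| := by
  have := (lp.memℓp f).summable (p := 1) (by norm_num)
  simpa [Real.norm_eq_abs] using this

private lemma l1_op_bound (A : E₁ →L[ℝ] E₁) (C : ℝ)
    (h : ∀ j, ‖A (lp.single 1 j 1)‖ ≤ C) (x : E₁) : ‖A x‖ ≤ C * ‖x‖ := by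
  haveI : Fact ((1:ℝ≥0∞) ≤ 1) := ⟨le_rfl⟩
  have hC : 0 ≤ C := le_trans (norm_nonneg _) (h 0)
  have hs : HasSum (fun j : ℕ => lp.single 1 j (x j)) x :=
    lp.hasSum_single (by norm_num) x
  have h2 : HasSum (fun j : ℕ => A (lp.single 1 j (x j))) (A x) := hs.mapL A
  have hsingle : ∀ j : ℕ, (lp.single 1 j (x j) : E₁) = x j • (lp.single 1 j (1:ℝ) : E₁) := by
    intro j
    rw [← lp.single_smul]
    norm_num
  have key : ∀ j : ℕ, ‖A (lp.single 1 j (x j))‖ ≤ |x j| * C := by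
    intro j
    rw [hsingle j, map_smul, norm_smul, Real.norm_eq_abs]
    exact mul_le_mul_of_nonneg_left (h j) (abs_nonneg _)
  have hsum2 : Summable fun j : ℕ => |x j| * C := (l1_summable x).mul_right C
  have hsum1 : Summable fun j : ℕ => ‖A (lp.single 1 j (x j))‖ :=
    Summable.of_nonneg_of_le (fun j => norm_nonneg _) key hsum2
  calc ‖A x‖ = ‖∑' j : ℕ, A (lp.single 1 j (x j))‖ := by rw [h2.tsum_eq]
    _ ≤ ∑' j : ℕ, ‖A (lp.single 1 j (x j))‖ := norm_tsum_le_tsum_norm hsum1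
    _ ≤ ∑' j : ℕ, |x j| * C := Summable.tsum_le_tsum key hsum1 hsum2
    _ = (∑' j : ℕ, |x j|) * C := tsum_mul_right
    _ = C * ‖x‖ := by rw [l1_norm_eq x, mul_comm]

private lemma l1_col_bound (T : E₁ →L[ℝ] E₁) (b : ℝ) (j : ℕ)
    (hcolj : (T (lp.single 1 j 1) : ℕ → ℝ) j
        + ∑' i : {i : ℕ // i ≠ j}, |(T (lp.single 1 j 1) : ℕ → ℝ) i.1| ≤ b)
    (h : ℝ) (hh : 0 < h) (hsmall : h * (‖T‖ + 1) ≤ 1) :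
    ‖(lp.single 1 j 1 : E₁) + h • T (lp.single 1 j 1)‖ ≤ 1 + h * b := by
  set g : E₁ := T (lp.single 1 j 1) with hg
  have hgsum : Summable fun i => |g i| := l1_summable g
  have hej : ‖(lp.single 1 j (1:ℝ) : E₁)‖ = 1 := by
    have := lp.norm_single (p := 1) (E := fun _ : ℕ => ℝ) (by norm_num) j (1:ℝ)
    simpa using this
  have hgnorm : ‖g‖ ≤ ‖T‖ := by
    calc ‖g‖ ≤ ‖T‖ * ‖(lp.single 1 j (1:ℝ) : E₁)‖ := T.le_opNorm _
      _ = ‖T‖ := by rw [hej, mul_one]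
  have hgj : |g j| ≤ ‖T‖ := by
    have h1 : |g j| ≤ ∑' i, |g i| := Summable.le_tsum hgsum j (fun i _ => abs_nonneg _)
    rw [← l1_norm_eq] at h1
    exact h1.trans hgnorm
  set v : E₁ := lp.single 1 j 1 + h • g with hvdef
  have hv : ∀ i : ℕ, (v : ℕ → ℝ) i = (lp.single 1 j (1:ℝ) : ℕ → ℝ) i + h * g i := by
    intro i
    simp [hvdef]
    rfl
  have hvj : (v : ℕ → ℝ) j = 1 + h * g j := by
    rw [hv j, lp.single_apply_self]
  have hvne : ∀ i : ℕ, i ≠ j → (v : ℕ → ℝ) i = h * g i := by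
    intro i hi
    rw [hv i, lp.single_apply_ne 1 j _ hi, zero_add]
  have hvsum : Summable fun i => |(v : ℕ → ℝ) i| := l1_summable v
  have hsplit : ‖v‖ = |(v : ℕ → ℝ) j| + ∑' i, if i = j then 0 else |(v : ℕ → ℝ) i| := by
    rw [l1_norm_eq v]
    exact Summable.tsum_eq_add_tsum_ite hvsum j
  have hite : (fun i => if i = j then 0 else |(v : ℕ → ℝ) i|)
      = fun i => h * (if i = j then 0 else |g i|) := by
    funext i
    by_cases hi : i = j
    · simp [hi]
    · simp [hi, hvne i hi, abs_mul, abs_of_pos hh]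
  have hsubt : ∑' i, (if i = j then 0 else |g i|) = ∑' i : {i : ℕ // i ≠ j}, |g i.1| := by
    have h2 := tsum_subtype {i : ℕ | i ≠ j} (fun i => |g i|)
    have h3 : ∑' i : {i : ℕ // i ≠ j}, |g i.1| = ∑' x : ↑{i : ℕ | i ≠ j}, |g x.1| := rfl
    rw [h3, h2]
    apply tsum_congr
    intro i
    by_cases hi : i = j <;> simp [Set.indicator_apply, hi]
  have hT1 : 0 < ‖T‖ + 1 := by positivity
  have habs : |(v : ℕ → ℝ) j| = 1 + h * g j := by
    rw [hvj]
    apply abs_of_nonneg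
    nlinarith [abs_le.mp hgj]
  rw [hsplit, hite, tsum_mul_left, hsubt, habs]
  nlinarith [hcolj]

/-- in `E = ℓ¹(ℕ, ℝ)`, if `y' (t) = H t (y t)` for `t ≥ 0`, where the
continuous operator family `H` satisfies, for every `t ≥ 0` and every column `j`,
`(H t e_j)_j + ∑_{i ≠ j} |(H t e_j)_i| ≤ β t` with `β` continuous, then
`‖y t‖ ≤ exp (∫₀ᵗ β) * ‖y 0‖` for all `t ≥ 0`. -/
theorem l1_ode_lognorm_bound
    (H : ℝ → (lp (fun _ : ℕ => ℝ) 1 →L[ℝ] lp (fun _ : ℕ => ℝ) 1))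
    (hH : Continuous H)
    (β : ℝ → ℝ) (hβ : Continuous β)
    (hcol : ∀ t : ℝ, 0 ≤ t → ∀ j : ℕ,
      (H t (lp.single 1 j 1) : ℕ → ℝ) j
        + ∑' i : {i : ℕ // i ≠ j}, |(H t (lp.single 1 j 1) : ℕ → ℝ) i.1| ≤ β t)
    (y : ℝ → lp (fun _ : ℕ => ℝ) 1)
    (hy : ∀ t : ℝ, 0 ≤ t → HasDerivAt y (H t (y t)) t) :
    ∀ t : ℝ, 0 ≤ t → ‖y t‖ ≤ Real.exp (∫ u in (0:ℝ)..t, β u) * ‖y 0‖ := by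
  -- operator bound: for small h > 0, ‖v + h • H x v‖ ≤ (1 + h β x) ‖v‖
  have hopb : ∀ x : ℝ, 0 ≤ x → ∀ h : ℝ, 0 < h → h * (‖H x‖ + 1) ≤ 1 →
      ∀ v : E₁, ‖v + h • H x v‖ ≤ (1 + h * β x) * ‖v‖ := by
    intro x hx h hh hsmall v
    set A : E₁ →L[ℝ] E₁ := ContinuousLinearMap.id ℝ E₁ + h • H x with hA
    have hAapp : ∀ w : E₁, A w = w + h • H x w := by
      intro w; simp [hA]
    have hAcol : ∀ j : ℕ, ‖A (lp.single 1 j 1)‖ ≤ 1 + h * β x := by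
      intro j
      rw [hAapp]
      exact l1_col_bound (H x) (β x) j (hcol x hx j) h hh hsmall
    have := l1_op_bound A (1 + h * β x) hAcol v
    rwa [hAapp] at this
  intro t ht
  have hfcont : ContinuousOn (fun s => ‖y s‖) (Icc 0 t) := by
    intro s hs
    exact ((hy s hs.1).continuousAt.continuousWithinAt).norm
  -- Dini derivative estimate
  have hDini : ∀ x ∈ Ico (0:ℝ) t, ∀ r, β x * ‖y x‖ < r →
      ∃ᶠ z in 𝓝[>] x, slope (fun s => ‖y s‖) x z < r := by
    intro x hx r hr
    apply Eventually.frequently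
    have hd := hy x hx.1
    have hslope : Tendsto (slope y x) (𝓝[>] x) (𝓝 (H x (y x))) :=
      (hasDerivAt_iff_tendsto_slope.mp hd).mono_left
        (nhdsWithin_mono _ (fun z (hz : x < z) => Set.mem_compl_singleton_iff.mpr (ne_of_gt hz)))
    set d := H x (y x) with hdd
    have hev1 : ∀ᶠ z in 𝓝[>] x, ‖slope y x z - d‖ < r - β x * ‖y x‖ := by
      have := hslope (Metric.ball_mem_nhds d (show (0:ℝ) < r - β x * ‖y x‖ by linarith))
      filter_upwards [this] with z hz
      rw [← dist_eq_norm]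
      exact Metric.mem_ball.mp hz
    set δ : ℝ := (‖H x‖ + 1)⁻¹ with hδdef
    have hδ : 0 < δ := by positivity
    have hev2 : ∀ᶠ z in 𝓝[>] x, z ∈ Ioc x (x + δ) :=
      Ioc_mem_nhdsGT_of_mem ⟨le_rfl, lt_add_of_pos_right _ hδ⟩
    filter_upwards [hev1, hev2] with z h1 h2
    have hh0 : 0 < z - x := sub_pos.2 h2.1
    have hhδ : z - x ≤ δ := by linarith [h2.2]
    have hsmall : (z - x) * (‖H x‖ + 1) ≤ 1 := by
      have h3 : 0 < ‖H x‖ + 1 := by positivity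
      calc (z - x) * (‖H x‖ + 1) ≤ δ * (‖H x‖ + 1) :=
            mul_le_mul_of_nonneg_right hhδ h3.le
        _ = 1 := inv_mul_cancel₀ h3.ne'
    have hyz : y z = y x + (z - x) • slope y x z := by
      rw [slope_def_module, smul_inv_smul₀ hh0.ne']
      abel
    have hkey : ‖y x + (z - x) • d‖ ≤ (1 + (z - x) * β x) * ‖y x‖ :=
      hopb x hx.1 (z - x) hh0 hsmall (y x)
    have hdecomp : ‖y z‖ ≤ ‖y x + (z - x) • d‖ + (z - x) * ‖slope y x z - d‖ := by
      have : y z = (y x + (z - x) • d) + (z - x) • (slope y x z - d) := by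
        rw [hyz, smul_sub]; abel
      rw [this]
      calc ‖(y x + (z - x) • d) + (z - x) • (slope y x z - d)‖
          ≤ ‖y x + (z - x) • d‖ + ‖(z - x) • (slope y x z - d)‖ := norm_add_le _ _
        _ = ‖y x + (z - x) • d‖ + (z - x) * ‖slope y x z - d‖ := by
            rw [norm_smul, Real.norm_eq_abs, abs_of_pos hh0]
    rw [slope_def_field, div_lt_iff₀ hh0]
    nlinarith [h1, hkey, hdecomp]
  -- upper bound on β
  obtain ⟨M, hM⟩ := isCompact_Icc.exists_bound_of_continuousOn (hβ.continuousOn (s := Icc 0 t))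
  set C : ℝ := M + 1 with hC
  have hβC : ∀ x ∈ Icc (0:ℝ) t, β x < C := by
    intro x hx
    have := hM x hx
    rw [Real.norm_eq_abs] at this
    have := (abs_le.mp this).2
    linarith
  have main : ∀ ε : ℝ, 0 < ε →
      ‖y t‖ ≤ Real.exp (∫ u in (0:ℝ)..t, β u) * ‖y 0‖ + ε * Real.exp (C * t) := by
    intro ε hε
    set B : ℝ → ℝ := fun z => Real.exp (∫ u in (0:ℝ)..z, β u) * ‖y 0‖
        + ε * Real.exp (C * z) with hBdef
    set B' : ℝ → ℝ := fun z => Real.exp (∫ u in (0:ℝ)..z, β u) * β z * ‖y 0‖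
        + ε * (Real.exp (C * z) * C) with hB'def
    have hB : ∀ z, HasDerivAt B (B' z) z := by
      intro z
      have h1 : HasDerivAt (fun z => ∫ u in (0:ℝ)..z, β u) (β z) z :=
        (hβ.integral_hasStrictDerivAt 0 z).hasDerivAt
      have h2 := (h1.exp.mul_const ‖y 0‖)
      have h3 : HasDerivAt (fun z => Real.exp (C * z)) (Real.exp (C * z) * C) z := by
        simpa using (((hasDerivAt_id z).const_mul C).exp)
      exact h2.add (h3.const_mul ε)
    have ha : ‖y 0‖ ≤ B 0 := by
      simp [hBdef, intervalIntegral.integral_same]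
      linarith
    have bound : ∀ z ∈ Ico (0:ℝ) t, ‖y z‖ = B z → β z * ‖y z‖ < B' z := by
      intro z hz heq
      rw [heq]
      have hβz : β z < C := hβC z ⟨hz.1, hz.2.le⟩
      have hexp : 0 < Real.exp (C * z) := Real.exp_pos _
      simp only [hBdef, hB'def]
      nlinarith [mul_pos (mul_pos hε hexp) (sub_pos.mpr hβz)]
    have := image_le_of_liminf_slope_right_lt_deriv_boundary hfcont hDini ha hB bound
      (Set.right_mem_Icc.mpr ht)
    simpa [hBdef] using this
  apply le_of_forall_pos_le_add
  intro ε hε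
  have hexp : 0 < Real.exp (C * t) := Real.exp_pos _
  have h1 := main (ε / Real.exp (C * t)) (by positivity)
  calc ‖y t‖ ≤ Real.exp (∫ u in (0:ℝ)..t, β u) * ‖y 0‖
        + ε / Real.exp (C * t) * Real.exp (C * t) := h1
    _ = Real.exp (∫ u in (0:ℝ)..t, β u) * ‖y 0‖ + ε := by
        rw [div_mul_cancel₀ _ hexp.ne']
end

section
/- Let 0 < M < l ≤ L, let σ = √(M/l) and α* = (√l − √M)². Let λ : ℕ → ℝ → ℝ and μ : ℕ → ℝ → ℝ with μ 0 t = 0 for all t, l ≤ λ k t ≤ L for all k ∈ ℕ and t ≥ 0, and 0 ≤ μ k t ≤ M for all k ≥ 1 and t ≥ 0. Let x : ℕ → ℝ → ℝ be a family of nonnegative differentiable functions satisfying the birth–death Kolmogorov system with rates λ, μ. Assume that for every t ≥ 0 the family (k ↦ σ^k · x k t) is summable, that V(t) := Σ_k σ^k · x k t is differentiable, and that V'(t) = Σ_k σ^k · (x k)'(t) (the termwise-differentiated series being summable). Then for all t ≥ 0: V(t) ≤ e^{−α* t} · V(0). -/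
/-- The (one-dimensional, inhomogeneous) birth–death forward Kolmogorov system
with birth rates `lam k t` and death rates `mu k t` (and `mu 0 t = 0`):
`(x 0)' = μ₁ x₁ - λ₀ x₀` and, for `k ≥ 1`,
`(x k)' = λ_{k-1} x_{k-1} + μ_{k+1} x_{k+1} - (λ_k + μ_k) x_k`, for `t ≥ 0`. -/
def BDKolmogorov (lam mu : ℕ → ℝ → ℝ) (x : ℕ → ℝ → ℝ) : Prop :=
  (∀ t : ℝ, 0 ≤ t →
    HasDerivAt (x 0) (mu 1 t * x 1 t - lam 0 t * x 0 t) t) ∧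
  (∀ k : ℕ, 1 ≤ k → ∀ t : ℝ, 0 ≤ t →
    HasDerivAt (x k)
      (lam (k - 1) t * x (k - 1) t + mu (k + 1) t * x (k + 1) t
        - (lam k t + mu k t) * x k t) t)

/-- Theorem 1 of the paper, decay of the weighted functional:
under the null-ergodicity condition `0 < M < l ≤ L`, with `σ = √(M/l)` and
`α* = (√l - √M)²`, the weighted functional `V(t) = ∑_k σ^k x_k(t)` of a
nonnegative solution of the birth–death Kolmogorov system satisfies
`V(t) ≤ e^{-α* t} V(0)` for all `t ≥ 0`. -/
theorem bd_null_ergodic_weighted_decay (l L M : ℝ)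
    (hM0 : 0 < M) (hMl : M < l) (hlL : l ≤ L)
    (lam mu : ℕ → ℝ → ℝ) (x : ℕ → ℝ → ℝ) (V : ℝ → ℝ)
    (hmu0 : ∀ t : ℝ, mu 0 t = 0)
    (hlaml : ∀ (k : ℕ) (t : ℝ), 0 ≤ t → l ≤ lam k t)
    (hlamL : ∀ (k : ℕ) (t : ℝ), 0 ≤ t → lam k t ≤ L)
    (hmul : ∀ k : ℕ, 1 ≤ k → ∀ t : ℝ, 0 ≤ t → 0 ≤ mu k t)
    (hmuM : ∀ k : ℕ, 1 ≤ k → ∀ t : ℝ, 0 ≤ t → mu k t ≤ M)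
    (hxnn : ∀ (k : ℕ) (t : ℝ), 0 ≤ t → 0 ≤ x k t)
    (hxdiff : ∀ k : ℕ, Differentiable ℝ (x k))
    (hkol : BDKolmogorov lam mu x)
    (hsum : ∀ t : ℝ, 0 ≤ t → Summable fun k : ℕ => (Real.sqrt (M / l)) ^ k * x k t)
    (hV : ∀ t : ℝ, V t = ∑' k : ℕ, (Real.sqrt (M / l)) ^ k * x k t)
    (hsum' : ∀ t : ℝ, 0 ≤ t →
      Summable fun k : ℕ => (Real.sqrt (M / l)) ^ k * deriv (x k) t)
    (hV' : ∀ t : ℝ, 0 ≤ t →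
      HasDerivAt V (∑' k : ℕ, (Real.sqrt (M / l)) ^ k * deriv (x k) t) t) :
    ∀ t : ℝ, 0 ≤ t →
      V t ≤ Real.exp (-(Real.sqrt l - Real.sqrt M) ^ 2 * t) * V 0 := by
  set σ := Real.sqrt (M / l) with hσdef
  set α := (Real.sqrt l - Real.sqrt M) ^ 2 with hαdef
  have hl0 : 0 < l := hM0.trans hMl
  have hσ0 : 0 < σ := Real.sqrt_pos.mpr (by positivity)
  have hσne : σ ≠ 0 := ne_of_gt hσ0
  have hsl : Real.sqrt l ^ 2 = l := Real.sq_sqrt hl0.le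
  have hsm : Real.sqrt M ^ 2 = M := Real.sq_sqrt hM0.le
  have hsl0 : 0 < Real.sqrt l := Real.sqrt_pos.mpr hl0
  have hσl : σ * Real.sqrt l = Real.sqrt M := by
    rw [hσdef, ← Real.sqrt_mul (by positivity), div_mul_cancel₀ _ hl0.ne']
  have hσ1 : σ < 1 := by
    nlinarith [Real.sqrt_lt_sqrt hM0.le hMl, hσl, hsl0]
  have hσ2 : σ ^ 2 * l = M := by
    have : σ ^ 2 = M / l := Real.sq_sqrt (by positivity)
    rw [this]; field_simp
  clear_value σ α
  -- scalar inequality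
  have hscalar : ∀ lamv muv : ℝ, l ≤ lamv → 0 ≤ muv → muv ≤ M →
      σ * lamv + muv / σ - lamv - muv ≤ -α := by
    intro lamv muv h1 h2 h3
    have hq : muv / σ * σ = muv := div_mul_cancel₀ muv hσ0.ne'
    have hασ : α * σ = (l + M) * σ - 2 * M := by
      rw [hαdef]
      nlinarith [hσl, hsl, hsm]
    have h5 : 0 ≤ (lamv - l) * (σ - σ ^ 2) := by
      apply mul_nonneg (by linarith)
      nlinarith [hσ0, hσ1]
    have h6 : 0 ≤ (M - muv) * (1 - σ) := mul_nonneg (by linarith) (by linarith)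
    have h4 : (σ * lamv + muv / σ - lamv - muv) * σ ≤ (-α) * σ := by
      nlinarith [hq, hασ, h5, h6, hσ2]
    exact le_of_mul_le_mul_right h4 hσ0
  -- key derivative bound
  have key : ∀ t : ℝ, 0 ≤ t → (∑' k : ℕ, σ ^ k * deriv (x k) t) ≤ -α * V t := by
    intro t ht
    have hmuk : ∀ k, 0 ≤ mu k t ∧ mu k t ≤ M := by
      intro k
      rcases Nat.eq_zero_or_pos k with rfl | hk
      · simp [hmu0 t, hM0.le]
      · exact ⟨hmul k hk t ht, hmuM k hk t ht⟩
    have sa : Summable fun k : ℕ => σ ^ k * x k t := hsum t ht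
    have hann : ∀ k, 0 ≤ σ ^ k * x k t :=
      fun k => mul_nonneg (pow_nonneg hσ0.le k) (hxnn k t ht)
    set A : ℕ → ℝ := fun k => σ ^ (k + 1) * lam k t * x k t with hA
    set B : ℕ → ℝ := fun k => σ ^ k * mu (k + 1) t * x (k + 1) t with hB
    set C : ℕ → ℝ := fun k => σ ^ k * (lam k t + mu k t) * x k t with hC
    set E : ℕ → ℝ := fun k => σ ^ k * mu k t * x k t / σ with hE
    have sA : Summable A := by
      refine Summable.of_nonneg_of_le (fun k => ?_) (fun k => ?_) (sa.mul_left (σ * L))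
      · exact mul_nonneg (mul_nonneg (pow_nonneg hσ0.le _)
          (hl0.le.trans (hlaml k t ht))) (hxnn k t ht)
      · have hp : σ ^ (k + 1) = σ ^ k * σ := pow_succ σ k
        simp only [hA, hp]
        nlinarith [mul_nonneg (mul_nonneg (pow_nonneg hσ0.le k) (hxnn k t ht)) hσ0.le,
          hlamL k t ht]
    have sC : Summable C := by
      refine Summable.of_nonneg_of_le (fun k => ?_) (fun k => ?_) (sa.mul_left (L + M))
      · exact mul_nonneg (mul_nonneg (pow_nonneg hσ0.le _)
          (by nlinarith [hlaml k t ht, (hmuk k).1])) (hxnn k t ht)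
      · simp only [hC]
        nlinarith [mul_nonneg (pow_nonneg hσ0.le k) (hxnn k t ht),
          hlamL k t ht, (hmuk k).2]
    have sE : Summable E := by
      refine Summable.of_nonneg_of_le (fun k => ?_) (fun k => ?_) (sa.mul_left (M / σ))
      · exact div_nonneg (mul_nonneg (mul_nonneg (pow_nonneg hσ0.le _)
          (hmuk k).1) (hxnn k t ht)) hσ0.le
      · simp only [hE]
        have h8 : M / σ * (σ ^ k * x k t) = σ ^ k * M * x k t / σ := by
          field_simp
        rw [h8, div_le_div_iff₀ hσ0 hσ0]
        nlinarith [mul_nonneg (pow_nonneg hσ0.le k) (hxnn k t ht), (hmuk k).2,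
          mul_nonneg (sub_nonneg.mpr (hmuk k).2)
            (mul_nonneg (mul_nonneg (pow_nonneg hσ0.le k) (hxnn k t ht)) hσ0.le)]
    have hEB : ∀ k, E (k + 1) = B k := by
      intro k
      simp only [hE, hB, pow_succ]
      field_simp
    have sB : Summable B :=
      ((summable_nat_add_iff 1).mpr sE).congr hEB
    set A' : ℕ → ℝ := fun k => match k with | 0 => 0 | (n + 1) => A n with hA'
    have sA' : Summable A' :=
      (summable_nat_add_iff 1).mp (sA.congr fun n => rfl)
    have hpt : ∀ k, σ ^ k * deriv (x k) t = A' k + B k - C k := by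
      intro k
      match k with
      | 0 =>
        rw [(hkol.1 t ht).deriv]
        simp only [hA', hB, hC, hmu0 t]
        ring
      | (n + 1) =>
        rw [(hkol.2 (n + 1) (Nat.le_add_left 1 n) t ht).deriv]
        simp only [hA', hA, hB, hC, Nat.add_sub_cancel]
        ring
    have hT : (∑' k : ℕ, σ ^ k * deriv (x k) t)
        = (∑' k, A' k) + (∑' k, B k) - (∑' k, C k) := by
      rw [tsum_congr hpt, Summable.tsum_sub (sA'.add sB) sC, Summable.tsum_add sA' sB]
    have hTA : (∑' k, A' k) = ∑' k, A k := by
      rw [Summable.tsum_eq_zero_add sA']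
      have h0 : A' 0 = 0 := rfl
      rw [h0, zero_add]
    have hTB : (∑' k, B k) = ∑' k, E k := by
      rw [Summable.tsum_eq_zero_add sE]
      have h0 : E 0 = 0 := by simp [hE, hmu0 t]
      rw [h0, zero_add]
      exact tsum_congr fun k => (hEB k).symm
    have hle : (∑' k, A k) + (∑' k, E k) - (∑' k, C k) ≤ -α * V t := by
      rw [← Summable.tsum_add sA sE, ← Summable.tsum_sub (sA.add sE) sC, hV t, ← tsum_mul_left]
      refine Summable.tsum_le_tsum (fun k => ?_) ((sA.add sE).sub sC) (sa.mul_left (-α))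
      have hc : 0 ≤ σ ^ k * x k t := hann k
      have hs := hscalar (lam k t) (mu k t) (hlaml k t ht) (hmuk k).1 (hmuk k).2
      have heq : A k + E k - C k
          = (σ * lam k t + mu k t / σ - lam k t - mu k t) * (σ ^ k * x k t) := by
        simp only [hA, hE, hC]
        ring
      calc A k + E k - C k
          = (σ * lam k t + mu k t / σ - lam k t - mu k t) * (σ ^ k * x k t) := heq
        _ ≤ (-α) * (σ ^ k * x k t) := mul_le_mul_of_nonneg_right hs hc
    rw [hT, hTA, hTB]
    exact hle
  -- Gronwall step
  intro t ht
  have hg : ∀ s : ℝ, 0 ≤ s → HasDerivAt (fun u => Real.exp (α * u) * V u)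
      (α * Real.exp (α * s) * V s
        + Real.exp (α * s) * (∑' k : ℕ, σ ^ k * deriv (x k) s)) s := by
    intro s hs
    have h0 : HasDerivAt (fun u : ℝ => α * u) α s := by
      simpa using (hasDerivAt_id s).const_mul α
    have h1 : HasDerivAt (fun u : ℝ => Real.exp (α * u)) (α * Real.exp (α * s)) s := by
      simpa [mul_comm] using h0.exp
    exact h1.mul (hV' s hs)
  have hcont : ContinuousOn (fun u => Real.exp (α * u) * V u) (Set.Ici 0) :=
    fun s hs => ((hg s hs).continuousAt).continuousWithinAt
  have hdiff : DifferentiableOn ℝ (fun u => Real.exp (α * u) * V u)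
      (interior (Set.Ici (0 : ℝ))) := by
    rw [interior_Ici]
    exact fun s hs => ((hg s (le_of_lt hs)).differentiableAt).differentiableWithinAt
  have hd0 : ∀ s ∈ interior (Set.Ici (0 : ℝ)),
      deriv (fun u => Real.exp (α * u) * V u) s ≤ 0 := by
    rw [interior_Ici]
    intro s hs
    rw [(hg s hs.le).deriv]
    have h2 : (∑' k : ℕ, σ ^ k * deriv (x k) s) + α * V s ≤ 0 := by
      linarith [key s hs.le]
    have h3 : Real.exp (α * s) * ((∑' k : ℕ, σ ^ k * deriv (x k) s) + α * V s) ≤ 0 :=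
      mul_nonpos_of_nonneg_of_nonpos (Real.exp_pos (α * s)).le h2
    have h4 : α * Real.exp (α * s) * V s
        + Real.exp (α * s) * (∑' k : ℕ, σ ^ k * deriv (x k) s)
        = Real.exp (α * s) * ((∑' k : ℕ, σ ^ k * deriv (x k) s) + α * V s) := by ring
    rw [h4]
    exact h3
  have hanti : AntitoneOn (fun u => Real.exp (α * u) * V u) (Set.Ici 0) :=
    antitoneOn_of_deriv_nonpos (convex_Ici 0) hcont hdiff hd0
  have h5 : Real.exp (α * t) * V t ≤ V 0 := by
    have := hanti Set.self_mem_Ici (Set.mem_Ici.mpr ht) ht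
    simpa using this
  have hexp : Real.exp (-α * t) * (Real.exp (α * t) * V t) ≤ Real.exp (-α * t) * V 0 :=
    mul_le_mul_of_nonneg_left h5 (Real.exp_pos _).le
  calc V t = Real.exp (-α * t) * (Real.exp (α * t) * V t) := by
        rw [← mul_assoc, ← Real.exp_add]
        ring_nf
        simp
    _ ≤ Real.exp (-α * t) * V 0 := hexp
end

section
/- Let 0 < M < l ≤ L, let σ = √(M/l) and α* = (√l − √M)². Let λ : ℕ → ℝ → ℝ and μ : ℕ → ℝ → ℝ with μ 0 t = 0 for all t, l ≤ λ k t ≤ L for all k ∈ ℕ and t ≥ 0, and 0 ≤ μ k t ≤ M for all k ≥ 1 and t ≥ 0. Let x : ℕ → ℝ → ℝ be a family of nonnegative differentiable functions satisfying the birth–death Kolmogorov system with rates λ, μ, such that for every t ≥ 0 the family (k ↦ σ^k · x k t) is summable, V(t) := Σ_k σ^k · x k t is differentiable, and V'(t) = Σ_k σ^k · (x k)'(t). Suppose furthermore that the initial condition is the point mass at state k₀, i.e. x k₀ 0 = 1 and x n 0 = 0 for n ≠ k₀. Then for every n ∈ ℕ and every t ≥ 0: Σ_{i=0}^{n} x i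 t ≤ σ^{k₀ − n} · e^{−α* t}. -/
/-- Theorem 1 of the paper, bound (14): under the null-ergodicity
condition `0 < M < l ≤ L`, with `σ = √(M/l)` and `α* = (√l - √M)²`, a
nonnegative solution of the birth–death Kolmogorov system started from the
point mass at `k₀` satisfies
`∑_{i=0}^n x_i(t) ≤ σ^{k₀}/σ^n · e^{-α* t}` for every `n` and every `t ≥ 0`. -/
theorem bd_null_ergodic_tail_bound (l L M : ℝ)
    (hM0 : 0 < M) (hMl : M < l) (hlL : l ≤ L)
    (lam mu : ℕ → ℝ → ℝ) (x : ℕ → ℝ → ℝ) (V : ℝ → ℝ) (k₀ : ℕ)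
    (hmu0 : ∀ t : ℝ, mu 0 t = 0)
    (hlaml : ∀ (k : ℕ) (t : ℝ), 0 ≤ t → l ≤ lam k t)
    (hlamL : ∀ (k : ℕ) (t : ℝ), 0 ≤ t → lam k t ≤ L)
    (hmul : ∀ k : ℕ, 1 ≤ k → ∀ t : ℝ, 0 ≤ t → 0 ≤ mu k t)
    (hmuM : ∀ k : ℕ, 1 ≤ k → ∀ t : ℝ, 0 ≤ t → mu k t ≤ M)
    (hxnn : ∀ (k : ℕ) (t : ℝ), 0 ≤ t → 0 ≤ x k t)
    (hxdiff : ∀ k : ℕ, Differentiable ℝ (x k))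
    (hkol : BDKolmogorov lam mu x)
    (hsum : ∀ t : ℝ, 0 ≤ t → Summable fun k : ℕ => (Real.sqrt (M / l)) ^ k * x k t)
    (hV : ∀ t : ℝ, V t = ∑' k : ℕ, (Real.sqrt (M / l)) ^ k * x k t)
    (hsum' : ∀ t : ℝ, 0 ≤ t →
      Summable fun k : ℕ => (Real.sqrt (M / l)) ^ k * deriv (x k) t)
    (hV' : ∀ t : ℝ, 0 ≤ t →
      HasDerivAt V (∑' k : ℕ, (Real.sqrt (M / l)) ^ k * deriv (x k) t) t)
    (hinit : x k₀ 0 = 1) (hinit' : ∀ n : ℕ, n ≠ k₀ → x n 0 = 0) :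
    ∀ (n : ℕ) (t : ℝ), 0 ≤ t →
      ∑ i ∈ Finset.range (n + 1), x i t
        ≤ (Real.sqrt (M / l)) ^ k₀ / (Real.sqrt (M / l)) ^ n
            * Real.exp (-(Real.sqrt l - Real.sqrt M) ^ 2 * t) := by
  have hl0 : 0 < l := hM0.trans hMl
  set σ : ℝ := Real.sqrt (M / l) with hσdef
  set α : ℝ := (Real.sqrt l - Real.sqrt M) ^ 2 with hαdef
  have hsl : Real.sqrt l ^ 2 = l := Real.sq_sqrt hl0.le
  have hsM : Real.sqrt M ^ 2 = M := Real.sq_sqrt hM0.le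
  have hsl0 : 0 < Real.sqrt l := Real.sqrt_pos.2 hl0
  have hsM0 : 0 < Real.sqrt M := Real.sqrt_pos.2 hM0
  have hσl : σ * Real.sqrt l = Real.sqrt M := by
    rw [hσdef, ← Real.sqrt_mul (div_nonneg hM0.le hl0.le),
      div_mul_cancel₀ _ hl0.ne']
  have hσ0 : 0 < σ := Real.sqrt_pos.2 (div_pos hM0 hl0)
  have hσ1 : σ < 1 := by nlinarith
  -- key algebraic facts
  have keyA : ∀ a b : ℝ, l ≤ a → 0 ≤ b → b ≤ M →
      b + σ^2*a - σ*(a+b) + α*σ ≤ 0 := by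
    intro a b ha hb0 hbM
    nlinarith [mul_le_mul_of_nonneg_left ha (mul_pos hσ0 (sub_pos.2 hσ1)).le,
      mul_le_mul_of_nonneg_left hbM (sub_pos.2 hσ1).le, sq_nonneg σ]
  have keyB : ∀ a : ℝ, l ≤ a → σ*a - a ≤ -α := by
    intro a ha
    nlinarith [mul_le_mul_of_nonneg_left ha (sub_pos.2 hσ1).le]
  -- the differential inequality V' ≤ -α V on [0, ∞)
  have key : ∀ t : ℝ, 0 ≤ t →
      (∑' k : ℕ, σ ^ k * deriv (x k) t) ≤ -α * V t := by
    intro t ht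
    have hd0 : deriv (x 0) t = mu 1 t * x 1 t - lam 0 t * x 0 t :=
      (hkol.1 t ht).deriv
    have hdk : ∀ k : ℕ, deriv (x (k+1)) t =
        lam k t * x k t + mu (k + 2) t * x (k + 2) t
          - (lam (k+1) t + mu (k+1) t) * x (k+1) t := by
      intro k
      have h := (hkol.2 (k+1) (by omega) t ht).deriv
      simpa using h
    have hpart : ∀ N : ℕ,
        ∑ k ∈ Finset.range (N+1), σ ^ k * deriv (x k) t
          ≤ -α * ∑ k ∈ Finset.range (N+1), σ ^ k * x k t
            + σ ^ N * (mu (N+1) t * x (N+1) t)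
            - σ ^ (N+1) * (lam N t * x N t) := by
      intro N
      induction N with
      | zero =>
          simp only [Finset.sum_range_one, pow_zero, one_mul, zero_add,
            pow_one, hd0]
          have hB := keyB (lam 0 t) (hlaml 0 t ht)
          have hBx := mul_le_mul_of_nonneg_right hB (hxnn 0 t ht)
          nlinarith [hBx]
      | succ N ih =>
          rw [Finset.sum_range_succ, Finset.sum_range_succ
            (f := fun k => σ ^ k * x k t), hdk N]
          have hA := keyA (lam (N+1) t) (mu (N+1) t) (hlaml (N+1) t ht)
            (hmul (N+1) (by omega) t ht) (hmuM (N+1) (by omega) t ht)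
          have hc : (0:ℝ) ≤ σ ^ N * x (N+1) t :=
            mul_nonneg (pow_nonneg hσ0.le N) (hxnn (N+1) t ht)
          have hA' := mul_le_mul_of_nonneg_left hA hc
          have e3 : N + 1 + 1 = N + 2 := rfl
          rw [e3]
          have e1 : σ ^ (N+1) = σ ^ N * σ := pow_succ σ N
          have e2 : σ ^ (N+2) = σ ^ N * σ ^ 2 := by ring
          have hA'' : σ ^ N * x (N+1) t * (mu (N+1) t + σ^2*lam (N+1) t
              - σ*(lam (N+1) t + mu (N+1) t) + α*σ) ≤ 0 := by
            simpa using hA'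
          rw [e1, e2]
          rw [e1] at ih
          nlinarith [hA'', ih]
    -- pass to the limit N → ∞
    have hS : Filter.Tendsto (fun N : ℕ => ∑ k ∈ Finset.range (N+1),
        σ ^ k * deriv (x k) t) Filter.atTop
        (nhds (∑' k : ℕ, σ ^ k * deriv (x k) t)) :=
      ((hsum' t ht).hasSum.tendsto_sum_nat).comp (Filter.tendsto_add_atTop_nat 1)
    have hx0 : Filter.Tendsto (fun N : ℕ => σ ^ (N+1) * x (N+1) t)
        Filter.atTop (nhds 0) :=
      ((hsum t ht).tendsto_atTop_zero).comp (Filter.tendsto_add_atTop_nat 1)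
    have hG : Filter.Tendsto (fun N : ℕ => -α * ∑ k ∈ Finset.range (N+1),
        σ ^ k * x k t + M * σ⁻¹ * (σ ^ (N+1) * x (N+1) t)) Filter.atTop
        (nhds (-α * V t + M * σ⁻¹ * 0)) := by
      apply Filter.Tendsto.add
      · rw [hV t]
        exact (((hsum t ht).hasSum.tendsto_sum_nat).comp
          (Filter.tendsto_add_atTop_nat 1)).const_mul _
      · exact hx0.const_mul _
    have hle : ∀ N : ℕ, ∑ k ∈ Finset.range (N+1), σ ^ k * deriv (x k) t
        ≤ -α * ∑ k ∈ Finset.range (N+1), σ ^ k * x k t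
          + M * σ⁻¹ * (σ ^ (N+1) * x (N+1) t) := by
      intro N
      refine (hpart N).trans ?_
      have h1 : σ ^ N * (mu (N+1) t * x (N+1) t)
          ≤ M * σ⁻¹ * (σ ^ (N+1) * x (N+1) t) := by
        have he : M * σ⁻¹ * (σ ^ (N+1) * x (N+1) t)
            = σ ^ N * (M * x (N+1) t) := by
          rw [pow_succ]
          field_simp
        rw [he]
        exact mul_le_mul_of_nonneg_left
          (mul_le_mul_of_nonneg_right (hmuM (N+1) (by omega) t ht)
            (hxnn (N+1) t ht)) (pow_nonneg hσ0.le N)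
      have h2 : (0:ℝ) ≤ σ ^ (N+1) * (lam N t * x N t) :=
        mul_nonneg (pow_nonneg hσ0.le _)
          (mul_nonneg (hl0.le.trans (hlaml N t ht)) (hxnn N t ht))
      linarith
    have := le_of_tendsto_of_tendsto' hS hG hle
    simpa using this
  -- the initial value
  have hVnn0 : V 0 = σ ^ k₀ := by
    rw [hV 0, tsum_eq_single k₀ (by intro n hn; simp [hinit' n hn])]
    simp [hinit]
  -- Gronwall-type comparison
  have hWd : ∀ s : ℝ, 0 ≤ s → HasDerivAt (fun u => V u * Real.exp (α * u))
      ((∑' k : ℕ, σ ^ k * deriv (x k) s) * Real.exp (α * s)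
        + V s * (Real.exp (α * s) * α)) s := by
    intro s hs
    have h2 : HasDerivAt (fun u : ℝ => Real.exp (α * u))
        (Real.exp (α * s) * α) s := by
      simpa using ((hasDerivAt_id s).const_mul α).exp
    exact (hV' s hs).mul h2
  have hW : ∀ t : ℝ, 0 ≤ t → V t * Real.exp (α * t) ≤ σ ^ k₀ := by
    intro t ht
    have hanti : AntitoneOn (fun u => V u * Real.exp (α * u))
        (Set.Icc 0 t) := by
      apply antitoneOn_of_deriv_nonpos (convex_Icc 0 t)
      · intro s hs
        exact ((hWd s hs.1).differentiableAt).continuousAt.continuousWithinAt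
      · intro s hs
        rw [interior_Icc] at hs
        exact ((hWd s hs.1.le).differentiableAt).differentiableWithinAt
      · intro s hs
        rw [interior_Icc] at hs
        rw [(hWd s hs.1.le).deriv]
        have hk := key s hs.1.le
        have he : (0:ℝ) < Real.exp (α * s) := Real.exp_pos _
        nlinarith [hk, he]
    have := hanti (Set.left_mem_Icc.2 ht) (Set.right_mem_Icc.2 ht) ht
    simpa [hVnn0] using this
  -- conclusion
  intro n t ht
  have hVt : V t ≤ σ ^ k₀ * Real.exp (-α * t) := by
    have h := hW t ht
    have he : (0:ℝ) < Real.exp (α * t) := Real.exp_pos _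
    have hexp : Real.exp (-α * t) = (Real.exp (α * t))⁻¹ := by
      rw [neg_mul, Real.exp_neg]
    rw [hexp, ← div_eq_mul_inv, le_div_iff₀ he]
    exact h
  have hσn : (0:ℝ) < σ ^ n := pow_pos hσ0 n
  have hsum_le : σ ^ n * ∑ i ∈ Finset.range (n+1), x i t ≤ V t := by
    rw [Finset.mul_sum, hV t]
    refine le_trans (Finset.sum_le_sum ?_) (Summable.sum_le_tsum _ ?_ (hsum t ht))
    · intro i hi
      have hi' : i ≤ n := by
        simpa [Nat.lt_succ_iff] using Finset.mem_range.1 hi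
      exact mul_le_mul_of_nonneg_right
        (pow_le_pow_of_le_one hσ0.le hσ1.le hi') (hxnn i t ht)
    · intro i _
      exact mul_nonneg (pow_nonneg hσ0.le i) (hxnn i t ht)
  rw [div_mul_eq_mul_div, le_div_iff₀ hσn]
  calc (∑ i ∈ Finset.range (n+1), x i t) * σ ^ n
      = σ ^ n * ∑ i ∈ Finset.range (n+1), x i t := by ring
    _ ≤ V t := hsum_le
    _ ≤ σ ^ k₀ * Real.exp (-α * t) := hVt
end

section
/- Let 0 < M < l ≤ L, let σ = √(M/l) and α* = (√l − √M)². Let λ : ℕ → ℝ → ℝ and μ : ℕ → ℝ → ℝ with μ 0 t = 0 for all t, l ≤ λ k t ≤ L for all k ∈ ℕ and t ≥ 0, and 0 ≤ μ k t ≤ M for all k ≥ 1 and t ≥ 0. Let x : ℕ → ℝ → ℝ be a family of nonnegative differentiable functions satisfying the birth–death Kolmogorov system with rates λ, μ, such that for every t ≥ 0 the family (k ↦ σ^k · x k t) is summable, V(t) := Σ_k σ^k · x k t is differentiable, and V'(t) = Σ_k σ^k · (x k)'(t). Then for every n ∈ ℕ, x n t → 0 as t → ∞. -/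
set_option maxHeartbeats 1000000 in
/-- Theorem 1 of the paper, null ergodicity: under the condition
`0 < M < l ≤ L`, every state probability `x n t` of a nonnegative solution of
the birth–death Kolmogorov system tends to `0` as `t → ∞`. -/
theorem bd_null_ergodic (l L M : ℝ)
    (hM0 : 0 < M) (hMl : M < l) (hlL : l ≤ L)
    (lam mu : ℕ → ℝ → ℝ) (x : ℕ → ℝ → ℝ) (V : ℝ → ℝ)
    (hmu0 : ∀ t : ℝ, mu 0 t = 0)
    (hlaml : ∀ (k : ℕ) (t : ℝ), 0 ≤ t → l ≤ lam k t)
    (hlamL : ∀ (k : ℕ) (t : ℝ), 0 ≤ t → lam k t ≤ L)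
    (hmul : ∀ k : ℕ, 1 ≤ k → ∀ t : ℝ, 0 ≤ t → 0 ≤ mu k t)
    (hmuM : ∀ k : ℕ, 1 ≤ k → ∀ t : ℝ, 0 ≤ t → mu k t ≤ M)
    (hxnn : ∀ (k : ℕ) (t : ℝ), 0 ≤ t → 0 ≤ x k t)
    (hxdiff : ∀ k : ℕ, Differentiable ℝ (x k))
    (hkol : BDKolmogorov lam mu x)
    (hsum : ∀ t : ℝ, 0 ≤ t → Summable fun k : ℕ => (Real.sqrt (M / l)) ^ k * x k t)
    (hV : ∀ t : ℝ, V t = ∑' k : ℕ, (Real.sqrt (M / l)) ^ k * x k t)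
    (hsum' : ∀ t : ℝ, 0 ≤ t →
      Summable fun k : ℕ => (Real.sqrt (M / l)) ^ k * deriv (x k) t)
    (hV' : ∀ t : ℝ, 0 ≤ t →
      HasDerivAt V (∑' k : ℕ, (Real.sqrt (M / l)) ^ k * deriv (x k) t) t) :
    ∀ n : ℕ, Filter.Tendsto (fun t : ℝ => x n t) Filter.atTop (nhds 0) := by
  have hl0 : 0 < l := hM0.trans hMl
  set s : ℝ := Real.sqrt (M / l) with hs
  set α : ℝ := (Real.sqrt l - Real.sqrt M) ^ 2 with hα
  have hsqlt : Real.sqrt M < Real.sqrt l := Real.sqrt_lt_sqrt hM0.le hMl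
  have hα0 : 0 < α := pow_pos (sub_pos.mpr hsqlt) 2
  have hs0 : 0 < s := Real.sqrt_pos.mpr (div_pos hM0 hl0)
  have hs1 : s < 1 := by
    rw [hs, show (1 : ℝ) = Real.sqrt 1 by simp]
    exact Real.sqrt_lt_sqrt (by positivity) ((div_lt_one hl0).mpr hMl)
  have hsl : s * Real.sqrt l = Real.sqrt M := by
    rw [hs, Real.sqrt_div hM0.le]
    field_simp
  have hl2 : Real.sqrt l ^ 2 = l := Real.sq_sqrt hl0.le
  have hM2 : Real.sqrt M ^ 2 = M := Real.sq_sqrt hM0.le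
  have hsql : 0 < Real.sqrt l := Real.sqrt_pos.mpr hl0
  have hcoef : (s - 1) * l + (1 - s) * (M / s) = -α := by
    have hMs : M / s = Real.sqrt M * Real.sqrt l := by
      rw [div_eq_iff hs0.ne']
      calc M = Real.sqrt M ^ 2 := hM2.symm
        _ = Real.sqrt M * (s * Real.sqrt l) := by rw [hsl]; ring
        _ = Real.sqrt M * Real.sqrt l * s := by ring
    rw [hMs, hα]
    nlinarith [hsl]
  -- nonnegativity of V
  have hVnn : ∀ t : ℝ, 0 ≤ t → 0 ≤ V t := by
    intro t ht
    rw [hV]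
    exact tsum_nonneg fun k => mul_nonneg (pow_nonneg hs0.le k) (hxnn k t ht)
  -- key differential inequality
  have key : ∀ t : ℝ, 0 ≤ t →
      (∑' k : ℕ, s ^ k * deriv (x k) t) ≤ -α * V t := by
    intro t ht
    have hSx := hsum t ht
    have hgnn : ∀ k : ℕ, 0 ≤ s ^ k * x k t :=
      fun k => mul_nonneg (pow_nonneg hs0.le k) (hxnn k t ht)
    have hmunn : ∀ k : ℕ, 0 ≤ mu k t := by
      intro k
      cases k with
      | zero => simp [hmu0 t]
      | succ m => exact hmul (m + 1) (Nat.succ_le_succ (Nat.zero_le m)) t ht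
    have hmuM' : ∀ k : ℕ, mu k t ≤ M := by
      intro k
      cases k with
      | zero => simp [hmu0 t]; exact hM0.le
      | succ m => exact hmuM (m + 1) (Nat.succ_le_succ (Nat.zero_le m)) t ht
    set A : ℕ → ℝ := fun k => s ^ k * (lam k t * x k t) with hAdef
    set B : ℕ → ℝ := fun k => s ^ k * (mu k t * x k t) with hBdef
    set C : ℕ → ℝ := fun k => s ^ k * (mu (k + 1) t * x (k + 1) t) with hCdef
    set D : ℕ → ℝ := fun k =>
      if k = 0 then 0 else s ^ k * (lam (k - 1) t * x (k - 1) t) with hDdef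
    have hAnn : ∀ k, 0 ≤ A k := fun k =>
      mul_nonneg (pow_nonneg hs0.le k)
        (mul_nonneg ((hl0.le.trans (hlaml k t ht))) (hxnn k t ht))
    have hA : Summable A := by
      apply Summable.of_nonneg_of_le hAnn (fun k => ?_) (hSx.mul_left L)
      calc A k = lam k t * (s ^ k * x k t) := by ring
        _ ≤ L * (s ^ k * x k t) :=
          mul_le_mul_of_nonneg_right (hlamL k t ht) (hgnn k)
    have hB : Summable B := by
      apply Summable.of_nonneg_of_le
        (fun k => mul_nonneg (pow_nonneg hs0.le k)
          (mul_nonneg (hmunn k) (hxnn k t ht)))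
        (fun k => ?_) (hSx.mul_left M)
      calc B k = mu k t * (s ^ k * x k t) := by ring
        _ ≤ M * (s ^ k * x k t) :=
          mul_le_mul_of_nonneg_right (hmuM' k) (hgnn k)
    have hshift : Summable (fun k : ℕ => s ^ (k + 1) * x (k + 1) t) :=
      (summable_nat_add_iff 1).mpr hSx
    have hCnn : ∀ k, 0 ≤ C k := fun k =>
      mul_nonneg (pow_nonneg hs0.le k)
        (mul_nonneg (hmunn (k + 1)) (hxnn (k + 1) t ht))
    have hCle : ∀ k : ℕ, C k ≤ (M / s) * (s ^ (k + 1) * x (k + 1) t) := by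
      intro k
      have : C k = mu (k + 1) t * (s ^ k * x (k + 1) t) := by ring
      rw [this]
      have h1 : mu (k + 1) t * (s ^ k * x (k + 1) t)
          ≤ M * (s ^ k * x (k + 1) t) :=
        mul_le_mul_of_nonneg_right (hmuM' (k + 1))
          (mul_nonneg (pow_nonneg hs0.le k) (hxnn (k + 1) t ht))
      have h2 : M * (s ^ k * x (k + 1) t)
          = (M / s) * (s ^ (k + 1) * x (k + 1) t) := by
        field_simp
        ring
      linarith [h1, h2.ge, h2.le]
    have hC : Summable C :=
      Summable.of_nonneg_of_le hCnn hCle (hshift.mul_left (M / s))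
    have hD1 : ∀ k : ℕ, D (k + 1) = s * A k := by
      intro k
      simp only [hDdef, hAdef, Nat.succ_ne_zero, if_false, Nat.add_sub_cancel]
      ring
    have hD : Summable D :=
      (summable_nat_add_iff 1).mp ((hA.mul_left s).congr fun k => (hD1 k).symm)
    have hB1 : ∀ k : ℕ, B (k + 1) = s * C k := by
      intro k
      simp only [hBdef, hCdef]
      ring
    have htsumD : ∑' k, D k = s * ∑' k, A k := by
      rw [Summable.tsum_eq_zero_add hD]
      simp only [hDdef, if_pos rfl, zero_add]
      rw [show (fun k : ℕ => (if k + 1 = 0 then (0:ℝ)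
          else s ^ (k+1) * (lam (k+1-1) t * x (k+1-1) t)))
          = fun k => s * A k from funext fun k => hD1 k, tsum_mul_left]
    have htsumB : ∑' k, B k = s * ∑' k, C k := by
      rw [Summable.tsum_eq_zero_add hB]
      simp only [hBdef, hmu0 t, zero_mul, mul_zero, zero_add]
      rw [show (fun k : ℕ => s ^ (k+1) * (mu (k+1) t * x (k+1) t))
          = fun k => s * C k from funext fun k => hB1 k, tsum_mul_left]
    have hfD : ∀ k : ℕ, s ^ k * deriv (x k) t = D k + C k - A k - B k := by
      intro k
      cases k with
      | zero =>
        rw [(hkol.1 t ht).deriv]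
        simp only [hDdef, hAdef, hBdef, hCdef, if_pos rfl, pow_zero, hmu0 t]
        ring
      | succ m =>
        rw [(hkol.2 (m + 1) (Nat.succ_le_succ (Nat.zero_le m)) t ht).deriv]
        simp only [hDdef, hAdef, hBdef, hCdef, Nat.succ_ne_zero, if_false,
          Nat.add_sub_cancel]
        ring
    have htsum_split : (∑' k : ℕ, s ^ k * deriv (x k) t)
        = (s - 1) * (∑' k, A k) + (1 - s) * (∑' k, C k) := by
      calc (∑' k : ℕ, s ^ k * deriv (x k) t)
          = ∑' k : ℕ, ((D k + C k) - (A k + B k)) := by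
            apply tsum_congr
            intro k
            rw [hfD k]; ring
        _ = (∑' k, (D k + C k)) - ∑' k, (A k + B k) :=
            Summable.tsum_sub (hD.add hC) (hA.add hB)
        _ = ((∑' k, D k) + ∑' k, C k) - ((∑' k, A k) + ∑' k, B k) := by
            rw [Summable.tsum_add hD hC, Summable.tsum_add hA hB]
        _ = (s - 1) * (∑' k, A k) + (1 - s) * (∑' k, C k) := by
            rw [htsumD, htsumB]; ring
    have hAl : l * V t ≤ ∑' k, A k := by
      rw [hV, ← tsum_mul_left]
      refine Summable.tsum_le_tsum (fun k => ?_) (hSx.mul_left l) hA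
      calc l * (s ^ k * x k t) = l * x k t * s ^ k := by ring
        _ ≤ lam k t * x k t * s ^ k := by
            apply mul_le_mul_of_nonneg_right _ (pow_nonneg hs0.le k)
            exact mul_le_mul_of_nonneg_right (hlaml k t ht) (hxnn k t ht)
        _ = A k := by rw [hAdef]; ring
    have hCM : ∑' k, C k ≤ (M / s) * V t := by
      have h1 : ∑' k, C k ≤ ∑' k, (M / s) * (s ^ (k + 1) * x (k + 1) t) :=
        Summable.tsum_le_tsum hCle hC (hshift.mul_left (M / s))
      have h2 : (∑' k : ℕ, s ^ (k + 1) * x (k + 1) t) ≤ V t := by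
        have h3 := Summable.tsum_eq_zero_add hSx
        rw [hV]
        simp only [pow_zero, one_mul] at h3
        rw [h3]
        have := hxnn 0 t ht
        linarith
      rw [tsum_mul_left] at h1
      have hMs0 : 0 ≤ M / s := div_nonneg hM0.le hs0.le
      calc ∑' k, C k ≤ (M / s) * ∑' k : ℕ, s ^ (k + 1) * x (k + 1) t := h1
        _ ≤ (M / s) * V t := mul_le_mul_of_nonneg_left h2 hMs0
    rw [htsum_split]
    have e1 : (s - 1) * (∑' k, A k) ≤ (s - 1) * (l * V t) :=
      mul_le_mul_of_nonpos_left hAl (by linarith)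
    have e2 : (1 - s) * (∑' k, C k) ≤ (1 - s) * ((M / s) * V t) :=
      mul_le_mul_of_nonneg_left hCM (by linarith)
    have : (s - 1) * (l * V t) + (1 - s) * ((M / s) * V t) = -α * V t := by
      linear_combination V t * hcoef
    linarith
  -- Gronwall / comparison: V t ≤ V 0 * exp (-(α * t))
  have hW : ∀ t : ℝ, 0 ≤ t →
      HasDerivAt (fun u => V u * Real.exp (α * u))
        ((∑' k : ℕ, s ^ k * deriv (x k) t) * Real.exp (α * t)
          + V t * (Real.exp (α * t) * α)) t := by
    intro t ht
    have h := (hV' t ht).mul (((hasDerivAt_id t).const_mul α).exp)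
    simp at h; exact h
  have hanti : AntitoneOn (fun u => V u * Real.exp (α * u)) (Set.Ici 0) := by
    apply antitoneOn_of_deriv_nonpos (convex_Ici 0)
    · intro t ht
      exact ((hW t ht).continuousAt).continuousWithinAt
    · intro t ht
      rw [interior_Ici] at ht
      exact ((hW t (le_of_lt ht)).differentiableAt).differentiableWithinAt
    · intro t ht
      rw [interior_Ici] at ht
      rw [(hW t (le_of_lt ht)).deriv]
      have h1 := key t (le_of_lt ht)
      have h2 := Real.exp_pos (α * t)
      nlinarith
  have hVle : ∀ t : ℝ, 0 ≤ t → V t ≤ V 0 * Real.exp (-(α * t)) := by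
    intro t ht
    have h1 : V t * Real.exp (α * t) ≤ V 0 * Real.exp (α * 0) :=
      hanti (Set.self_mem_Ici) (Set.mem_Ici.mpr ht) ht
    simp only [mul_zero, Real.exp_zero, mul_one] at h1
    rw [Real.exp_neg, mul_comm (V 0), ← div_eq_inv_mul,
      le_div_iff₀ (Real.exp_pos (α * t))]
    exact h1
  -- conclusion
  intro n
  have hupper : ∀ t : ℝ, 0 ≤ t →
      x n t ≤ (s ^ n)⁻¹ * (V 0 * Real.exp (-(α * t))) := by
    intro t ht
    have h1 : s ^ n * x n t ≤ V t := by
      rw [hV]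
      exact Summable.le_tsum (hsum t ht) n fun m _ =>
        mul_nonneg (pow_nonneg hs0.le m) (hxnn m t ht)
    have hsn : 0 < s ^ n := pow_pos hs0 n
    calc x n t = (s ^ n)⁻¹ * (s ^ n * x n t) := by
          field_simp
      _ ≤ (s ^ n)⁻¹ * V t :=
          mul_le_mul_of_nonneg_left h1 (inv_nonneg.mpr hsn.le)
      _ ≤ (s ^ n)⁻¹ * (V 0 * Real.exp (-(α * t))) :=
          mul_le_mul_of_nonneg_left (hVle t ht) (inv_nonneg.mpr hsn.le)
  have hbound : Filter.Tendsto
      (fun t : ℝ => (s ^ n)⁻¹ * (V 0 * Real.exp (-(α * t))))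
      Filter.atTop (nhds 0) := by
    have h1 : Filter.Tendsto (fun t : ℝ => α * t) Filter.atTop Filter.atTop :=
      Filter.Tendsto.const_mul_atTop hα0 Filter.tendsto_id
    have h1' : Filter.Tendsto (fun t : ℝ => -(α * t)) Filter.atTop Filter.atBot :=
      Filter.tendsto_neg_atBot_iff.mpr h1
    have h2 : Filter.Tendsto (fun t : ℝ => Real.exp (-(α * t)))
        Filter.atTop (nhds 0) := Real.tendsto_exp_comp_nhds_zero.mpr h1'
    have h3 := (h2.const_mul (V 0)).const_mul ((s ^ n)⁻¹)
    simpa using h3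
  apply tendsto_of_tendsto_of_tendsto_of_le_of_le' tendsto_const_nhds hbound
  · filter_upwards [Filter.eventually_ge_atTop (0 : ℝ)] with t ht
    exact hxnn n t ht
  · filter_upwards [Filter.eventually_ge_atTop (0 : ℝ)] with t ht
    exact hupper t ht
end

section
/- Let l, L, m, M ∈ ℝ with 0 ≤ l ≤ L, 0 < L < m ≤ M, and let β = √(M/L). Then for all real a, a', b, b' with l ≤ a ≤ L, l ≤ a' ≤ L, m ≤ b ≤ M, and m ≤ b' ≤ M: a + b − β·a' − b'/β ≥ l + m − 2·√(L·M). -/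
/-- with `0 ≤ l ≤ L`, `0 < L < m ≤ M` and `β = √(M/L)`, for all
`a, a' ∈ [l, L]` and `b, b' ∈ [m, M]` one has
`a + b - β a' - b'/β ≥ l + m - 2√(LM)`. -/
theorem diag_dominance_lower_bound_ergodic (l L m M : ℝ)
    (h0l : 0 ≤ l) (hlL : l ≤ L) (h0L : 0 < L) (hLm : L < m) (hmM : m ≤ M)
    (a a' b b' : ℝ) (hal : l ≤ a) (haL : a ≤ L) (ha'l : l ≤ a') (ha'L : a' ≤ L)
    (hbm : m ≤ b) (hbM : b ≤ M) (hb'm : m ≤ b') (hb'M : b' ≤ M) :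
    a + b - Real.sqrt (M / L) * a' - b' / Real.sqrt (M / L)
      ≥ l + m - 2 * Real.sqrt (L * M) := by
  have h0M : 0 < M := lt_of_le_of_lt h0L.le (lt_of_lt_of_le hLm hmM)
  have hβ : (0:ℝ) < Real.sqrt (M / L) := Real.sqrt_pos.2 (div_pos h0M h0L)
  set β := Real.sqrt (M / L) with hβdef
  have hsL : 0 < Real.sqrt L := Real.sqrt_pos.2 h0L
  have hsM : 0 < Real.sqrt M := Real.sqrt_pos.2 h0M
  have hL2 : Real.sqrt L * Real.sqrt L = L := Real.mul_self_sqrt h0L.le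
  have hM2 : Real.sqrt M * Real.sqrt M = M := Real.mul_self_sqrt h0M.le
  have hβeq : β = Real.sqrt M / Real.sqrt L := by
    rw [hβdef, Real.sqrt_div h0M.le]
  have hLM : Real.sqrt (L * M) = Real.sqrt L * Real.sqrt M :=
    Real.sqrt_mul h0L.le M
  have h1 : β * L = Real.sqrt L * Real.sqrt M := by
    rw [hβeq]; field_simp; nlinarith
  have h2 : M / β = Real.sqrt L * Real.sqrt M := by
    rw [hβeq]
    rw [div_div_eq_mul_div, div_eq_iff hsM.ne']
    nlinarith
  have ha' : β * a' ≤ β * L := mul_le_mul_of_nonneg_left ha'L hβ.le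
  have hb' : b' / β ≤ M / β := div_le_div_of_nonneg_right hb'M hβ.le
  rw [hLM]
  nlinarith [ha', hb', h1, h2]
end
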